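/- arXiv:2402.07082 — 3 statements merged into one kernel-verified Lean document; each statement's English description precedes it below -/
import Mathlib

section
/- Let x₀, x₁, …, x_T be probability vectors in the simplex over [A] defined by the exponential weights update x_{t+1,i} = x_{t,i}·exp(−η c_{t,i}) / Σ_{i'} x_{t,i'}·exp(−η c_{t,i'}), starting from the uniform distribution x₀ = (1/A,…,1/A), where c_t ∈ ℝ^A are loss vectors satisfying η·c_{t,i} ≥ −1 for all t ∈ [T] and i ∈ [A]. Then for any probability distribution y on [A], Σ_{t=1}^T ⟨x_t − y, c_t⟩ ≤ (log A)/η + η·Σ_{t=1}^T Σ_{i=1}^A x_{t,i}·c_{t,i}². -/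
/-! Exponential weights keep the potential `Φ(x) = ∑ᵢ yᵢ log xᵢ` under control: the update
multiplies `xᵢ` by `exp (-η cᵢ) / Z`, so one step raises `Φ` by `-η ⟨y, c⟩ - log Z`, and the bound
`exp w ≤ 1 + w + w²` for `w ≤ 1` gives `log Z ≤ -η ⟨x, c⟩ + η² ∑ᵢ xᵢ cᵢ²`. Summing over time,
`Φ` telescopes from `Φ(x₀) = -log A` to `Φ(x_T) ≤ 0`. -/

open Finset Real

lemma Real.exp_le_one_add_add_sq {w : ℝ} (hw : w ≤ 1) : exp w ≤ 1 + w + w ^ 2 := by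
  rcases le_or_gt w (-1) with hw' | hw'
  · nlinarith [exp_le_one_iff.mpr (by linarith : w ≤ 0)]
  · have := abs_le.mp (abs_exp_sub_one_sub_id_le (abs_le.mpr ⟨hw'.le, hw⟩))
    linarith

namespace Hedge

variable {ι : Type*} [Fintype ι]

noncomputable def partition (η : ℝ) (p c : ι → ℝ) : ℝ := ∑ i, p i * exp (-η * c i)

noncomputable def step (η : ℝ) (p c : ι → ℝ) (i : ι) : ℝ := p i * exp (-η * c i) / partition η p c

variable {η : ℝ} {p c : ι → ℝ}

lemma partition_pos (hp : ∀ i, 0 ≤ p i) (hs : ∑ i, p i = 1) : 0 < partition η p c := by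
  obtain ⟨i, -, hi⟩ := exists_ne_zero_of_sum_ne_zero (hs ▸ one_ne_zero : ∑ i, p i ≠ 0)
  exact sum_pos' (fun j _ ↦ mul_nonneg (hp j) (exp_pos _).le)
    ⟨i, mem_univ i, mul_pos ((hp i).lt_of_ne' hi) (exp_pos _)⟩

lemma step_pos (hp : ∀ i, 0 < p i) (hs : ∑ i, p i = 1) (i : ι) : 0 < step η p c i :=
  div_pos (mul_pos (hp i) (exp_pos _)) (partition_pos (fun j ↦ (hp j).le) hs)

lemma sum_step (hp : ∀ i, 0 ≤ p i) (hs : ∑ i, p i = 1) : ∑ i, step η p c i = 1 := by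
  simp only [step, ← sum_div]
  exact div_self (partition_pos hp hs).ne'

lemma log_step {i : ι} (hpi : p i ≠ 0) (hZ : partition η p c ≠ 0) :
    log (step η p c i) = log (p i) - η * c i - log (partition η p c) := by
  rw [step, log_div (mul_ne_zero hpi (exp_pos _).ne') hZ, log_mul hpi (exp_pos _).ne', log_exp]
  ring

lemma log_partition_le (hp : ∀ i, 0 ≤ p i) (hs : ∑ i, p i = 1) (hc : ∀ i, -1 ≤ η * c i) :
    log (partition η p c) ≤ -η * ∑ i, p i * c i + η ^ 2 * ∑ i, p i * c i ^ 2 := by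
  have hZ : partition η p c ≤ 1 - η * ∑ i, p i * c i + η ^ 2 * ∑ i, p i * c i ^ 2 :=
    calc partition η p c ≤ ∑ i, p i * (1 + -η * c i + (-η * c i) ^ 2) :=
          sum_le_sum fun i _ ↦ mul_le_mul_of_nonneg_left
            (exp_le_one_add_add_sq (by linarith [hc i])) (hp i)
      _ = ∑ i, p i - η * ∑ i, p i * c i + η ^ 2 * ∑ i, p i * c i ^ 2 := by
          rw [mul_sum, mul_sum, ← sum_sub_distrib, ← sum_add_distrib]
          exact sum_congr rfl fun i _ ↦ by ring
      _ = 1 - η * ∑ i, p i * c i + η ^ 2 * ∑ i, p i * c i ^ 2 := by rw [hs]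
  linarith [log_le_sub_one_of_pos (partition_pos (c := c) (η := η) hp hs)]

lemma step_regret_le (hp : ∀ i, 0 < p i) (hs : ∑ i, p i = 1) (hc : ∀ i, -1 ≤ η * c i)
    {y : ι → ℝ} (hy : ∑ i, y i = 1) :
    η * ∑ i, (p i - y i) * c i ≤ η ^ 2 * ∑ i, p i * c i ^ 2
      + (∑ i, y i * log (step η p c i) - ∑ i, y i * log (p i)) := by
  have hZ := partition_pos (η := η) (c := c) (fun i ↦ (hp i).le) hs
  have hΦ : ∑ i, y i * log (step η p c i) - ∑ i, y i * log (p i)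
      = -η * ∑ i, y i * c i - log (partition η p c) := by
    have hterm : ∀ i, y i * log (step η p c i) - y i * log (p i)
        = -η * (y i * c i) - log (partition η p c) * y i := fun i ↦ by
      rw [log_step (hp i).ne' hZ.ne']; ring
    rw [← sum_sub_distrib, sum_congr rfl fun i _ ↦ hterm i, sum_sub_distrib, ← mul_sum,
      ← mul_sum, hy, mul_one]
  have hsplit : ∑ i, (p i - y i) * c i = ∑ i, p i * c i - ∑ i, y i * c i := by
    rw [← sum_sub_distrib]
    exact sum_congr rfl fun i _ ↦ by ring
  rw [hΦ, hsplit]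
  linarith [log_partition_le (fun i ↦ (hp i).le) hs hc]

lemma sum_mul_log_nonpos {y : ι → ℝ} (hy : ∀ i, 0 ≤ y i) (hp : ∀ i, 0 ≤ p i)
    (hs : ∑ i, p i = 1) : ∑ i, y i * log (p i) ≤ 0 :=
  sum_nonpos fun i _ ↦ mul_nonpos_of_nonneg_of_nonpos (hy i)
    (log_nonpos (hp i) (hs ▸ single_le_sum (fun j _ ↦ hp j) (mem_univ i)))

variable {T : ℕ} {c : ℕ → ι → ℝ} {x : ℕ → ι → ℝ}

lemma iterate_pos_and_sum_eq_one (hx0 : ∀ i, 0 < x 0 i) (hs0 : ∑ i, x 0 i = 1)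
    (hupd : ∀ t < T, ∀ i, x (t + 1) i = step η (x t) (c t) i) :
    ∀ t ≤ T, (∀ i, 0 < x t i) ∧ ∑ i, x t i = 1
  | 0, _ => ⟨hx0, hs0⟩
  | t + 1, ht => by
    obtain ⟨hp, hs⟩ := iterate_pos_and_sum_eq_one hx0 hs0 hupd t (by omega)
    simp only [hupd t ht]
    exact ⟨step_pos hp hs, sum_step (fun i ↦ (hp i).le) hs⟩

lemma regret_le (hx0 : ∀ i, 0 < x 0 i) (hs0 : ∑ i, x 0 i = 1)
    (hupd : ∀ t < T, ∀ i, x (t + 1) i = step η (x t) (c t) i)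
    (hc : ∀ t < T, ∀ i, -1 ≤ η * c t i) {y : ι → ℝ} (hy : ∑ i, y i = 1) :
    η * ∑ t ∈ range T, ∑ i, (x t i - y i) * c t i
      ≤ η ^ 2 * ∑ t ∈ range T, ∑ i, x t i * c t i ^ 2
        + (∑ i, y i * log (x T i) - ∑ i, y i * log (x 0 i)) := by
  rw [← sum_range_sub (fun t ↦ ∑ i, y i * log (x t i)), mul_sum, mul_sum, ← sum_add_distrib]
  refine sum_le_sum fun t ht ↦ ?_
  have ht : t < T := mem_range.mp ht
  obtain ⟨hp, hs⟩ := iterate_pos_and_sum_eq_one hx0 hs0 hupd t ht.le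
  simpa only [hupd t ht] using step_regret_le hp hs (hc t ht) hy

end Hedge

open Hedge

theorem exp3_regret_general (A T : ℕ) (η : ℝ) (hη : 0 < η)
    (c : ℕ → Fin A → ℝ) (x : ℕ → Fin A → ℝ)
    (hx0 : ∀ i, x 0 i = 1 / A)
    (hupd : ∀ t, t < T → ∀ i,
      x (t + 1) i = x t i * Real.exp (-η * c t i) / ∑ i', x t i' * Real.exp (-η * c t i'))
    (hc : ∀ t, t < T → ∀ i : Fin A, -1 ≤ η * c t i)
    (y : Fin A → ℝ) (hy0 : ∀ i, 0 ≤ y i) (hy1 : ∑ i, y i = 1) :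
    ∑ t ∈ range T, ∑ i, (x t i - y i) * c t i
      ≤ Real.log A / η + η * ∑ t ∈ range T, ∑ i, x t i * (c t i) ^ 2 := by
  have hA : (0 : ℝ) < A := Nat.cast_pos.mpr (Nat.pos_of_ne_zero (by rintro rfl; simp at hy1))
  have hpos0 : ∀ i, 0 < x 0 i := fun i ↦ hx0 i ▸ by positivity
  have hsum0 : ∑ i, x 0 i = 1 := by simp [hx0, hA.ne']
  have hΦ0 : ∑ i, y i * log (x 0 i) = -log A := by simp [hx0, ← sum_mul, hy1]
  obtain ⟨hposT, hsumT⟩ := iterate_pos_and_sum_eq_one hpos0 hsum0 hupd T le_rfl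
  have hΦT : ∑ i, y i * log (x T i) ≤ 0 := sum_mul_log_nonpos hy0 (fun i ↦ (hposT i).le) hsumT
  have hregret := regret_le hpos0 hsum0 hupd hc hy1
  rw [← mul_le_mul_iff_right₀ hη, mul_add, mul_div_cancel₀ _ hη.ne', ← mul_assoc, ← sq]
  linarith

/-- EXP3 regret guarantee: exponential-weights iterates started from the uniform
distribution, with losses satisfying `η c t i ≥ -1`, enjoy the regret bound
`∑_t ⟨x_t - y, c_t⟩ ≤ log A / η + η ∑_t ∑_i x_{t,i} c_{t,i}²` against any
distribution `y` on the `A` actions. -/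
theorem exp3_regret (A T : ℕ) (hA : 1 ≤ A) (η : ℝ) (hη : 0 < η)
    (c : ℕ → Fin A → ℝ) (x : ℕ → Fin A → ℝ)
    (hx0 : ∀ i, x 0 i = 1 / A)
    (hupd : ∀ t, t < T → ∀ i,
      x (t + 1) i = x t i * Real.exp (-η * c t i) / ∑ i', x t i' * Real.exp (-η * c t i'))
    (hc : ∀ t, t < T → ∀ i : Fin A, -1 ≤ η * c t i)
    (y : Fin A → ℝ) (hy0 : ∀ i, 0 ≤ y i) (hy1 : ∑ i, y i = 1) :
    ∑ t ∈ range T, ∑ i, (x t i - y i) * c t i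
      ≤ Real.log A / η + η * ∑ t ∈ range T, ∑ i, x t i * (c t i) ^ 2 :=
  exp3_regret_general A T η hη c x hx0 hupd hc y hy0 hy1
end

section
/- In the exponential weights analysis, for each step t, the potential Φ_t = (1/η)·log(Σ_i exp(−η C_{t,i})) with C_{t,i} = Σ_{t'≤t} c_{t',i} satisfies Φ_t − Φ_{t−1} ≤ −⟨x_t, c_t⟩ + η·Σ_i x_{t,i} c_{t,i}² whenever η c_{t,i} ≥ −1 for all i, where x_{t,i} = exp(−η C_{t−1,i}) / Σ_{i'} exp(−η C_{t−1,i'}). -/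
/-! The step from `Φ_{t-1}` to `Φ_t` multiplies the partition function by the `x`-average
`∑ i, x i * exp (-η c i)`. Bounding `exp (-y) ≤ 1 - y + y²` termwise and then `log r ≤ r - 1` bounds
`η (Φ_t - Φ_{t-1})`, the log of that average, by `-η ⟨x, c⟩ + η² ∑ i, x i c_i²`. -/

open Finset

lemma Real.exp_neg_le_one_sub_add_sq {y : ℝ} (hy : -1 ≤ y) : Real.exp (-y) ≤ 1 - y + y ^ 2 := by
  rcases le_or_gt y 1 with hy' | hy'
  · have h := Real.abs_exp_sub_one_sub_id_le (x := -y) (abs_le.mpr ⟨by linarith, by linarith⟩)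
    linarith [(abs_le.mp h).2, neg_sq y]
  · have : Real.exp (-y) ≤ 1 := Real.exp_le_one_iff.mpr (by linarith)
    nlinarith

section WeightedSum

variable {ι : Type*} (s : Finset ι) {p z : ι → ℝ}

lemma sum_mul_exp_neg_le (hp : ∀ i ∈ s, 0 ≤ p i) (hz : ∀ i ∈ s, -1 ≤ z i) :
    ∑ i ∈ s, p i * Real.exp (-z i) ≤ ∑ i ∈ s, p i - ∑ i ∈ s, p i * z i + ∑ i ∈ s, p i * z i ^ 2 := by
  rw [← sum_sub_distrib, ← sum_add_distrib]
  refine sum_le_sum fun i hi => ?_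
  calc p i * Real.exp (-z i) ≤ p i * (1 - z i + z i ^ 2) :=
        mul_le_mul_of_nonneg_left (Real.exp_neg_le_one_sub_add_sq (hz i hi)) (hp i hi)
    _ = p i - p i * z i + p i * z i ^ 2 := by ring

lemma log_sum_mul_exp_neg_le (hp : ∀ i ∈ s, 0 ≤ p i) (hp_sum : ∑ i ∈ s, p i = 1)
    (hz : ∀ i ∈ s, -1 ≤ z i) :
    Real.log (∑ i ∈ s, p i * Real.exp (-z i)) ≤ -∑ i ∈ s, p i * z i + ∑ i ∈ s, p i * z i ^ 2 := by
  obtain ⟨j, hj, hpj⟩ : ∃ j ∈ s, 0 < p j :=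
    exists_lt_of_sum_lt (by simp [hp_sum])
  have h_pos : 0 < ∑ i ∈ s, p i * Real.exp (-z i) :=
    sum_pos' (fun i hi => mul_nonneg (hp i hi) (Real.exp_pos _).le)
      ⟨j, hj, mul_pos hpj (Real.exp_pos _)⟩
  have h_le := sum_mul_exp_neg_le s hp hz
  rw [hp_sum] at h_le
  linarith [Real.log_le_sub_one_of_pos h_pos]

end WeightedSum

theorem exp3_potential_step_general (A : ℕ) (η : ℝ) (hη : 0 < η)
    (Cprev c : Fin A → ℝ) (hc : ∀ i, -1 ≤ η * c i)
    (x : Fin A → ℝ)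
    (hx : ∀ i, x i = Real.exp (-η * Cprev i) / ∑ i', Real.exp (-η * Cprev i')) :
    (1 / η) * Real.log (∑ i, Real.exp (-η * (Cprev i + c i)))
        - (1 / η) * Real.log (∑ i, Real.exp (-η * Cprev i))
      ≤ -(∑ i, x i * c i) + η * ∑ i, x i * (c i) ^ 2 := by
  rcases isEmpty_or_nonempty (Fin A) with hA | hA
  · simp
  set S := ∑ i, Real.exp (-η * Cprev i)
  have hS : 0 < S := sum_pos (fun i _ => Real.exp_pos _) univ_nonempty
  have hx_pos : ∀ i, 0 < x i := fun i => hx i ▸ by positivity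
  have hx_sum : ∑ i, x i = 1 := by
    rw [← div_self hS.ne', sum_div]; exact sum_congr rfl fun i _ => hx i
  set R := ∑ i, x i * Real.exp (-(η * c i))
  have hT : ∑ i, Real.exp (-η * (Cprev i + c i)) = S * R := by
    rw [mul_sum]
    refine sum_congr rfl fun i _ => ?_
    rw [hx i, ← mul_assoc, mul_div_cancel₀ _ hS.ne', ← Real.exp_add]
    ring_nf
  have hR_pos : 0 < R := sum_pos (fun i _ => mul_pos (hx_pos i) (Real.exp_pos _)) univ_nonempty
  have h_log := log_sum_mul_exp_neg_le univ (fun i _ => (hx_pos i).le) hx_sum fun i _ => hc i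
  simp_rw [mul_pow, mul_left_comm (x _), ← mul_sum] at h_log
  rw [hT, Real.log_mul hS.ne' hR_pos.ne', ← mul_sub, add_sub_cancel_left]
  calc (1 / η) * Real.log R ≤ (1 / η) * (-(η * ∑ i, x i * c i) + η ^ 2 * ∑ i, x i * c i ^ 2) := by
        gcongr
    _ = _ := by field_simp

/-- One-step potential inequality in the exponential-weights analysis:
with `Φ = (1/η) log ∑_i exp(-η C_i)`, prefix sums `Cprev` and current loss `c`
satisfying `η c i ≥ -1`, and `x i = exp(-η Cprev i) / ∑ exp(-η Cprev i')`,
one has `Φ_t - Φ_{t-1} ≤ -⟨x, c⟩ + η ∑_i x_i c_i²`. -/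
theorem exp3_potential_step (A : ℕ) (hA : 0 < A) (η : ℝ) (hη : 0 < η)
    (Cprev c : Fin A → ℝ) (hc : ∀ i, -1 ≤ η * c i)
    (x : Fin A → ℝ)
    (hx : ∀ i, x i = Real.exp (-η * Cprev i) / ∑ i', Real.exp (-η * Cprev i')) :
    (1 / η) * Real.log (∑ i, Real.exp (-η * (Cprev i + c i)))
        - (1 / η) * Real.log (∑ i, Real.exp (-η * Cprev i))
      ≤ -(∑ i, x i * c i) + η * ∑ i, x i * (c i) ^ 2 :=
  exp3_potential_step_general A η hη Cprev c hc x hx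
end

section
/- Let X be a random vector in ℝ^d, α > 0 a scalar, and Σ a positive definite d×d matrix. If α·E[‖X‖²_{Σ^{-1}}] ≤ L where L ≥ e − 1, then α·E[‖X‖²_{Σ^{-1}}] ≤ L·log( det(Σ + α·E[X Xᵀ]) / det(Σ) ) ≤ α·L·E[‖X‖²_{Σ^{-1}}], where ‖v‖²_M := vᵀ M v. -/
/-!
Write `C = E[X Xᵀ]` and `q = E[Xᵀ Σ⁻¹ X] = tr(Σ⁻¹ C)`. Conjugating by `Σ^{-1/2}` turns
`det(Σ + αC) / det Σ` into `det(1 + A)` for the positive semidefinite matrix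
`A = α Σ^{-1/2} C Σ^{-1/2}` of trace `αq`. If `λᵢ ≥ 0` are the eigenvalues of `A`, then
`1 + Σ λᵢ ≤ Π (1 + λᵢ) ≤ exp (Σ λᵢ)`, so `log(1 + αq) ≤ log det(1 + A) ≤ αq`. The upper bound is the
second claim; the first follows from the scalar inequality `x ≤ L log(1 + x)` for `0 ≤ x ≤ L`,
which holds by concavity of `log` once `log(1 + L) ≥ 1`, i.e. `L ≥ e - 1`.
-/

open MeasureTheory Matrix
open scoped MatrixOrder ComplexOrder

theorem Finset.one_add_sum_le_prod_one_add {ι R : Type*} [CommSemiring R] [PartialOrder R]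
    [IsOrderedRing R] (s : Finset ι) {f : ι → R} (hf : ∀ i ∈ s, 0 ≤ f i) :
    1 + ∑ i ∈ s, f i ≤ ∏ i ∈ s, (1 + f i) := by
  induction s using Finset.cons_induction with
  | empty => simp
  | cons a s _ ih =>
    have hfa : 0 ≤ f a := hf a (Finset.mem_cons_self a s)
    have hs : ∀ i ∈ s, 0 ≤ f i := fun i hi => hf i (Finset.mem_cons_of_mem hi)
    rw [Finset.sum_cons, Finset.prod_cons]
    calc 1 + (f a + ∑ i ∈ s, f i) ≤ 1 + (f a + ∑ i ∈ s, f i) + f a * ∑ i ∈ s, f i :=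
          le_add_of_nonneg_right (mul_nonneg hfa (Finset.sum_nonneg hs))
      _ = (1 + f a) * (1 + ∑ i ∈ s, f i) := by ring
      _ ≤ (1 + f a) * ∏ i ∈ s, (1 + f i) :=
          mul_le_mul_of_nonneg_left (ih hs) (add_nonneg zero_le_one hfa)

theorem Real.le_mul_log_one_add {x L : ℝ} (hx : 0 ≤ x) (hxL : x ≤ L)
    (hL : Real.exp 1 - 1 ≤ L) : x ≤ L * Real.log (1 + x) := by
  have hL0 : 0 < L := by linarith [Real.add_one_lt_exp one_ne_zero]
  have ht0 : 0 ≤ x / L := div_nonneg hx hL0.le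
  have ht1 : x / L ≤ 1 := (div_le_one hL0).mpr hxL
  have hlog : 1 ≤ Real.log (1 + L) := by
    rw [Real.le_log_iff_exp_le (by linarith)]
    linarith
  have hchord := strictConcaveOn_log_Ioi.concaveOn.2 (x := 1) (y := 1 + L) (by norm_num)
    (by simp only [Set.mem_Ioi]; linarith) (sub_nonneg.2 ht1) ht0 (by ring)
  have hmid : (1 - x / L) • (1 : ℝ) + (x / L) • (1 + L) = 1 + x := by
    simp only [smul_eq_mul]
    field_simp
    ring
  rw [hmid, smul_eq_mul, smul_eq_mul, Real.log_one, mul_zero, zero_add] at hchord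
  calc x = L * (x / L) := (mul_div_cancel₀ x hL0.ne').symm
    _ ≤ L * (x / L * Real.log (1 + L)) := by gcongr; exact le_mul_of_one_le_right ht0 hlog
    _ ≤ L * Real.log (1 + x) := by gcongr

namespace Matrix

variable {n 𝕜 : Type*} [Fintype n] [DecidableEq n] [RCLike 𝕜]

theorem IsHermitian.det_cfc {A : Matrix n n 𝕜} (hA : A.IsHermitian) (f : ℝ → ℝ) :
    (cfc f A).det = ∏ i, (f (hA.eigenvalues i) : 𝕜) := by
  simp [hA.cfc_eq, IsHermitian.cfc, -Unitary.conjStarAlgAut_apply]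

theorem IsHermitian.det_one_add {A : Matrix n n 𝕜} (hA : A.IsHermitian) :
    (1 + A).det = ∏ i, ((1 + hA.eigenvalues i : ℝ) : 𝕜) := by
  rw [← hA.det_cfc, cfc_const_add (1 : ℝ) (fun x : ℝ => x) A, cfc_id' ℝ A, map_one]

theorem PosSemidef.one_add_trace_le_det_one_add {A : Matrix n n ℝ} (hA : A.PosSemidef) :
    1 + A.trace ≤ (1 + A).det := by
  rw [hA.isHermitian.det_one_add, hA.isHermitian.trace_eq_sum_eigenvalues]
  exact Finset.one_add_sum_le_prod_one_add _ fun i _ => hA.eigenvalues_nonneg i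

theorem PosSemidef.log_det_one_add_le_trace {A : Matrix n n ℝ} (hA : A.PosSemidef) :
    Real.log (1 + A).det ≤ A.trace := by
  have hdet_pos : 0 < (1 + A).det :=
    (add_pos_of_pos_of_nonneg one_pos hA.trace_nonneg).trans_le hA.one_add_trace_le_det_one_add
  have hdet_le : (1 + A).det ≤ Real.exp A.trace := by
    rw [hA.isHermitian.det_one_add, hA.isHermitian.trace_eq_sum_eigenvalues]
    exact Real.prod_one_add_le_exp_sum _ hA.eigenvalues_nonneg
  exact (Real.log_le_log hdet_pos hdet_le).trans_eq (Real.log_exp _)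

theorem PosDef.exists_posSemidef_det_add_div_det_eq {S M : Matrix n n 𝕜} (hS : S.PosDef)
    (hM : M.PosSemidef) :
    ∃ A : Matrix n n 𝕜, A.PosSemidef ∧ (S + M).det / S.det = (1 + A).det ∧
      A.trace = (S⁻¹ * M).trace := by
  set R := CFC.sqrt S⁻¹
  have hR : R.IsHermitian := (CFC.sqrt_nonneg S⁻¹).posSemidef.isHermitian
  have hRR : R * R = S⁻¹ := CFC.sqrt_mul_sqrt_self S⁻¹ hS.inv.posSemidef.nonneg
  refine ⟨R * M * R, by simpa [hR.eq] using hM.mul_mul_conjTranspose_same R, ?_, ?_⟩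
  · calc (S + M).det / S.det = (S⁻¹ * (S + M)).det := by
          rw [det_mul, det_nonsing_inv, Ring.inverse_eq_inv', div_eq_inv_mul]
      _ = (1 + R * (R * M)).det := by
          rw [Matrix.mul_add, nonsing_inv_mul S (hS.isUnit.map detMonoidHom), ← hRR,
            Matrix.mul_assoc]
      _ = (1 + R * M * R).det := by rw [det_one_add_mul_comm, Matrix.mul_assoc]
  · rw [trace_mul_cycle, hRR]

end Matrix

section SecondMoment

variable {Ω n : Type*} [MeasurableSpace Ω] [Fintype n] {μ : Measure Ω} {X : Ω → n → ℝ}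

-- An `abbrev`, so that rewriting with lemmas about it also matches the unfolded `of fun i j => …`.
noncomputable abbrev secondMomentMatrix (μ : Measure Ω) (X : Ω → n → ℝ) : Matrix n n ℝ :=
  of fun i j => ∫ ω, X ω i * X ω j ∂μ

theorem integral_sum_sum_const_mul {Y : n → n → Ω → ℝ} (hY : ∀ i j, Integrable (Y i j) μ)
    (c : n → n → ℝ) :
    ∫ ω, ∑ i, ∑ j, c i j * Y i j ω ∂μ = ∑ i, ∑ j, c i j * ∫ ω, Y i j ω ∂μ := by
  rw [integral_finsetSum _ fun i _ => integrable_finsetSum _ fun j _ => (hY i j).const_mul _]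
  refine Finset.sum_congr rfl fun i _ => ?_
  rw [integral_finsetSum _ fun j _ => (hY i j).const_mul _]
  simp only [integral_const_mul]

variable (hX : ∀ i j, Integrable (fun ω => X ω i * X ω j) μ)
include hX

theorem integral_dotProduct_mulVec_eq_trace (B : Matrix n n ℝ) :
    ∫ ω, X ω ⬝ᵥ (B *ᵥ X ω) ∂μ = (B * secondMomentMatrix μ X).trace := by
  have hpt : ∀ ω, X ω ⬝ᵥ (B *ᵥ X ω) = ∑ i, ∑ j, B i j * (X ω j * X ω i) := fun ω => by
    simp only [dotProduct, mulVec, Finset.mul_sum]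
    exact Finset.sum_congr rfl fun i _ => Finset.sum_congr rfl fun j _ => by ring
  simp_rw [hpt]
  exact integral_sum_sum_const_mul (fun i j => hX j i) B

theorem posSemidef_secondMomentMatrix : (secondMomentMatrix μ X).PosSemidef := by
  refine .of_dotProduct_mulVec_nonneg ?_ fun x => ?_
  · ext i j
    simp only [conjTranspose_apply, star_trivial, of_apply, mul_comm]
  · have hpt : ∀ ω, (x ⬝ᵥ X ω) ^ 2 = ∑ i, ∑ j, (x i * x j) * (X ω i * X ω j) := fun ω => by
      simp only [sq, dotProduct, Finset.sum_mul_sum]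
      exact Finset.sum_congr rfl fun i _ => Finset.sum_congr rfl fun j _ => by ring
    have hquad : star x ⬝ᵥ (secondMomentMatrix μ X *ᵥ x) = ∫ ω, (x ⬝ᵥ X ω) ^ 2 ∂μ := by
      simp_rw [hpt]
      rw [integral_sum_sum_const_mul hX]
      simp only [star_trivial, dotProduct, mulVec, of_apply, Finset.mul_sum]
      exact Finset.sum_congr rfl fun i _ => Finset.sum_congr rfl fun j _ => by ring
    rw [hquad]
    exact integral_nonneg fun ω => sq_nonneg _

end SecondMoment

theorem elliptical_potential_general
    {Ω : Type*} [MeasurableSpace Ω] (μ : Measure Ω)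
    (d : ℕ) (X : Ω → Fin d → ℝ)
    (hint : ∀ i j, Integrable (fun ω => X ω i * X ω j) μ)
    (S : Matrix (Fin d) (Fin d) ℝ) (hS : S.PosDef)
    (α L : ℝ) (hα : 0 < α) (hL : Real.exp 1 - 1 ≤ L)
    (hq : α * ∫ ω, (X ω) ⬝ᵥ (S⁻¹ *ᵥ X ω) ∂μ ≤ L) :
    α * (∫ ω, (X ω) ⬝ᵥ (S⁻¹ *ᵥ X ω) ∂μ)
      ≤ L * Real.log
          ((S + α • Matrix.of fun i j => ∫ ω, X ω i * X ω j ∂μ).det / S.det)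
    ∧ L * Real.log
          ((S + α • Matrix.of fun i j => ∫ ω, X ω i * X ω j ∂μ).det / S.det)
      ≤ α * L * ∫ ω, (X ω) ⬝ᵥ (S⁻¹ *ᵥ X ω) ∂μ := by
  obtain ⟨A, hA, hdet, htr⟩ :=
    hS.exists_posSemidef_det_add_div_det_eq ((posSemidef_secondMomentMatrix hint).smul hα.le)
  have htrA : A.trace = α * ∫ ω, (X ω) ⬝ᵥ (S⁻¹ *ᵥ X ω) ∂μ := by
    rw [htr, Matrix.mul_smul, trace_smul, smul_eq_mul, integral_dotProduct_mulVec_eq_trace hint]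
  rw [hdet, mul_right_comm, ← htrA]
  have hqA : A.trace ≤ L := htrA ▸ hq
  have hL0 : 0 ≤ L := hA.trace_nonneg.trans hqA
  constructor
  · calc A.trace ≤ L * Real.log (1 + A.trace) := Real.le_mul_log_one_add hA.trace_nonneg hqA hL
      _ ≤ L * Real.log (1 + A).det := by
          gcongr
          · linarith [hA.trace_nonneg]
          · exact hA.one_add_trace_le_det_one_add
  · calc L * Real.log (1 + A).det ≤ L * A.trace := by
          gcongr
          exact hA.log_det_one_add_le_trace
      _ = A.trace * L := mul_comm _ _

/-- Elliptical potential lemma (Lemma 11 of Zanette et al.): for a random vector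
`X`, `α > 0`, positive definite `Σ`, and `L ≥ e - 1`, if
`α·E[‖X‖²_{Σ⁻¹}] ≤ L`, then
`α·E[‖X‖²_{Σ⁻¹}] ≤ L·log(det(Σ + α·E[XXᵀ])/det Σ) ≤ α·L·E[‖X‖²_{Σ⁻¹}]`. -/
theorem elliptical_potential
    {Ω : Type*} [MeasurableSpace Ω] (μ : Measure Ω) [IsProbabilityMeasure μ]
    (d : ℕ) (X : Ω → Fin d → ℝ)
    (hmeas : ∀ i, Measurable fun ω => X ω i)
    (hint : ∀ i j, Integrable (fun ω => X ω i * X ω j) μ)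
    (S : Matrix (Fin d) (Fin d) ℝ) (hS : S.PosDef)
    (α L : ℝ) (hα : 0 < α) (hL : Real.exp 1 - 1 ≤ L)
    (hq : α * ∫ ω, (X ω) ⬝ᵥ (S⁻¹ *ᵥ X ω) ∂μ ≤ L) :
    α * (∫ ω, (X ω) ⬝ᵥ (S⁻¹ *ᵥ X ω) ∂μ)
      ≤ L * Real.log
          ((S + α • Matrix.of fun i j => ∫ ω, X ω i * X ω j ∂μ).det / S.det)
    ∧ L * Real.log
          ((S + α • Matrix.of fun i j => ∫ ω, X ω i * X ω j ∂μ).det / S.det)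
      ≤ α * L * ∫ ω, (X ω) ⬝ᵥ (S⁻¹ *ᵥ X ω) ∂μ :=
  elliptical_potential_general μ d X hint S hS α L hα hL hq
end
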